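/- Let (T, V) be a rooted stable tree-decomposition of a graph G, t a node of T, P a t-admissible path, and define W_u := V_u ∪ (V(P) ∩ V_{T_u}) for descendants u of t and W_u := V_u otherwise. Then the tree-decomposition (T, (W_u)) is also stable. -/

import Mathlib

open SimpleGraph

universe u

/-- `x` and `y` are joined by a walk in `G` all of whose vertices lie in `S`. -/
def ConnIn {V : Type u} (G : SimpleGraph V) (S : Set V) (x y : V) : Prop :=
  ∃ p : G.Walk x y, ∀ v ∈ p.support, v ∈ S

/-- `S` is a (nonempty) connected vertex set of `G`, i.e. `G[S]` is connected. -/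
def IsConnSet {V : Type u} (G : SimpleGraph V) (S : Set V) : Prop :=
  S.Nonempty ∧ ∀ x ∈ S, ∀ y ∈ S, ConnIn G S x y

/-- A tree-decomposition of `G` over the tree `T`. -/
structure TreeDecomp {V ι : Type u} (G : SimpleGraph V) (T : SimpleGraph ι) where
  isTree : T.IsTree
  bag : ι → Set V
  exists_bag : ∀ v : V, ∃ t, v ∈ bag t
  exists_bag_adj : ∀ ⦃u v : V⦄, G.Adj u v → ∃ t, u ∈ bag t ∧ v ∈ bag t
  bag_sep : ∀ ⦃t₁ t₃ : ι⦄ (p : T.Walk t₁ t₃), p.IsPath → ∀ t₂ ∈ p.support,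
      bag t₁ ∩ bag t₃ ⊆ bag t₂

/-- The union of the bags `B u` over `u ∈ A`. -/
def unionBags {V ι : Type u} (B : ι → Set V) (A : Set ι) : Set V := ⋃ u ∈ A, B u

/-- `s` is a descendant of `t` in the tree `T` rooted at `r`:
`t` lies on the (unique) `r`–`s` path. -/
def Desc {ι : Type u} (T : SimpleGraph ι) (r t s : ι) : Prop :=
  ∃ p : T.Walk r s, p.IsPath ∧ t ∈ p.support

/-- The set of descendants of `t` (the subtree `T_t`). -/
def descSet {ι : Type u} (T : SimpleGraph ι) (r t : ι) : Set ι := {s | Desc T r t s}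

/-- `s` is a child of `t` in the tree `T` rooted at `r`. -/
def IsChild {ι : Type u} (T : SimpleGraph ι) (r t s : ι) : Prop :=
  T.Adj t s ∧ Desc T r t s

/-- The vertex set of the component of `t₁` in `T` minus the edge `t₁t₂`. -/
def Side {ι : Type u} (T : SimpleGraph ι) (t₁ t₂ : ι) : Set ι :=
  {u | ∃ p : T.Walk u t₁, p.IsPath ∧ t₂ ∉ p.support}

/-- The family of bags `B` is stable: for every tree edge `t₁t₂`, both sides
induce connected subgraphs of `G`. -/
def StableBags {V ι : Type u} (G : SimpleGraph V) (T : SimpleGraph ι) (B : ι → Set V) : Prop :=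
  ∀ ⦃t₁ t₂ : ι⦄, T.Adj t₁ t₂ → IsConnSet G (unionBags B (Side T t₁ t₂))

def TreeDecomp.Stable {V ι : Type u} {G : SimpleGraph V} {T : SimpleGraph ι}
    (td : TreeDecomp G T) : Prop :=
  StableBags G T td.bag

/-- `P` is a `t`-admissible path (w.r.t. the root `r` and bags `B`): a shortest
path lying in `V_{T_t}` joining two distinct components of `G[B t]`. -/
structure IsAdmissible {V ι : Type u} (G : SimpleGraph V) (T : SimpleGraph ι)
    (B : ι → Set V) (r t : ι) {x y : V} (P : G.Walk x y) : Prop where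
  isPath : P.IsPath
  support_sub : ∀ v ∈ P.support, v ∈ unionBags B (descSet T r t)
  fst_mem : x ∈ B t
  snd_mem : y ∈ B t
  not_conn : ¬ ConnIn G (B t) x y
  minimal : ∀ ⦃x' y' : V⦄ (Q : G.Walk x' y'), Q.IsPath →
      (∀ v ∈ Q.support, v ∈ unionBags B (descSet T r t)) →
      x' ∈ B t → y' ∈ B t → ¬ ConnIn G (B t) x' y' → P.length ≤ Q.length

/-- The updated bags obtained by adding the path `P` as in `(*)`:
`W_u = V_u ∪ (V(P) ∩ V_{T_u})` for descendants `u` of `t`, and `W_u = V_u` otherwise. -/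
def updatedBag {V ι : Type u} (T : SimpleGraph ι) (B : ι → Set V) (r t : ι)
    {G : SimpleGraph V} {x y : V} (P : G.Walk x y) (u : ι) : Set V :=
  B u ∪ {v | Desc T r t u ∧ v ∈ P.support ∧ v ∈ unionBags B (descSet T r u)}

/-- The tree-width of `G`: the least `k` such that `G` has a tree-decomposition
all of whose bags have at most `k + 1` vertices. -/
noncomputable def treewidth {V : Type u} (G : SimpleGraph V) : ℕ :=
  sInf {k | ∃ (ι : Type u) (T : SimpleGraph ι) (td : TreeDecomp G T),
    ∀ t, (td.bag t).ncard ≤ k + 1}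

/-- A tree-decomposition is connected if every bag is a connected vertex set. -/
def TreeDecomp.IsConn {V ι : Type u} {G : SimpleGraph V} {T : SimpleGraph ι}
    (td : TreeDecomp G T) : Prop :=
  ∀ t, IsConnSet G (td.bag t)

/-- The connected tree-width of `G`. -/
noncomputable def ctw {V : Type u} (G : SimpleGraph V) : ℕ :=
  sInf {k | ∃ (ι : Type u) (T : SimpleGraph ι) (td : TreeDecomp G T),
    td.IsConn ∧ ∀ t, (td.bag t).ncard ≤ k + 1}

/-- The weak connected tree-width of `G`: the least `k` such that `G` has a
tree-decomposition each of whose bags is contained in a connected set of at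
most `k + 1` vertices. -/
noncomputable def wctw {V : Type u} (G : SimpleGraph V) : ℕ :=
  sInf {k | ∃ (ι : Type u) (T : SimpleGraph ι) (td : TreeDecomp G T),
    ∀ t, ∃ X, td.bag t ⊆ X ∧ IsConnSet G X ∧ X.ncard ≤ k + 1}

/-- The characteristic vector over GF(2) of the edge set of a walk. -/
noncomputable def walkChar {V : Type u} {G : SimpleGraph V} {x y : V}
    (p : G.Walk x y) : Sym2 V → ZMod 2 :=
  fun e => by classical exact if e ∈ p.edges then 1 else 0

/-- The characteristic vectors of the cycles of `G` of length at most `ℓ`. -/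
def cycleChars {V : Type u} (G : SimpleGraph V) (ℓ : ℕ) : Set (Sym2 V → ZMod 2) :=
  {f | ∃ (v : V) (p : G.Walk v v), p.IsCycle ∧ p.length ≤ ℓ ∧ f = walkChar p}

/-- The cycles of length at most `ℓ` generate the cycle space of `G` over GF(2). -/
def GeneratesLE {V : Type u} (G : SimpleGraph V) (ℓ : ℕ) : Prop :=
  ∀ ⦃v : V⦄ (p : G.Walk v v), p.IsCycle →
    walkChar p ∈ Submodule.span (ZMod 2) (cycleChars G ℓ)

/-- `ℓ(G)`: the least `ℓ` such that the cycles of length at most `ℓ`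
generate the cycle space of `G`. -/
noncomputable def ellGraph {V : Type u} (G : SimpleGraph V) : ℕ :=
  sInf {ℓ | GeneratesLE G ℓ}

/-- `Γ` is a set of cycles of `G` generating its cycle space over GF(2). -/
def GeneratesSet {V : Type u} (G : SimpleGraph V) (Γ : Set (Σ v : V, G.Walk v v)) : Prop :=
  (∀ c ∈ Γ, c.2.IsCycle) ∧
  ∀ ⦃v : V⦄ (p : G.Walk v v), p.IsCycle →
    walkChar p ∈ Submodule.span (ZMod 2) {f | ∃ c ∈ Γ, f = walkChar c.2}

/-- A bramble: a collection of connected vertex sets, any two of which have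
connected union. -/
def IsBramble {V : Type u} (G : SimpleGraph V) (B : Set (Set V)) : Prop :=
  (∀ S ∈ B, IsConnSet G S) ∧ ∀ S ∈ B, ∀ S' ∈ B, IsConnSet G (S ∪ S')

/-- `X` is a connected cover of the bramble `B`. -/
def IsConnCover {V : Type u} (G : SimpleGraph V) (B : Set (Set V)) (X : Set V) : Prop :=
  IsConnSet G X ∧ ∀ S ∈ B, (X ∩ S).Nonempty

/-- The connected order of a bramble: the least size of a connected cover. -/
noncomputable def connOrder {V : Type u} (G : SimpleGraph V) (B : Set (Set V)) : ℕ :=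
  sInf {n | ∃ X, IsConnCover G B X ∧ X.ncard = n}

/-- The maximum connected order of a bramble of `G`. -/
noncomputable def cbn {V : Type u} (G : SimpleGraph V) : ℕ :=
  sSup {n | ∃ B, IsBramble G B ∧ connOrder G B = n}

/-- A geodesic cycle: a cycle containing a shortest `G`-path between any two
of its vertices. -/
def IsGeodesicCycle {V : Type u} (G : SimpleGraph V) {v : V} (p : G.Walk v v) : Prop :=
  p.IsCycle ∧ ∀ x ∈ p.support, ∀ y ∈ p.support,
    ∃ q : G.Walk x y, q.length = G.dist x y ∧ ∀ e ∈ q.edges, e ∈ p.edges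

/-- The graph obtained from `K_n` by subdividing every edge exactly `k` times:
the edge between `i < j` is replaced by the path
`i, ((i,j),0), ((i,j),1), …, ((i,j),k-1), j`. -/
def subK (n k : ℕ) : SimpleGraph (Fin n ⊕ ({p : Fin n × Fin n // p.1 < p.2} × Fin k)) :=
  SimpleGraph.fromRel fun u v =>
    match u, v with
    | Sum.inl i, Sum.inl j => i < j ∧ k = 0
    | Sum.inl i, Sum.inr (e, c) =>
        (e.val.1 = i ∧ (c : ℕ) = 0) ∨ (e.val.2 = i ∧ (c : ℕ) = k - 1)
    | Sum.inr (e, c), Sum.inr (e', c') => e = e' ∧ (c' : ℕ) = (c : ℕ) + 1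
    | _, _ => False

/-!
If `t` lies on the side `T₁` of a tree edge, the new union `W_{T₁}` is the old union `V_{T₁}`
together with `V(P)`; this is connected because `V_{T₁}` is and `P` starts in `V_t ⊆ V_{T₁}`.
Otherwise every `u ∈ T₁` that received vertices of `P` is a descendant of `t`, and since `t ∉ T₁`
the whole subtree `T_u` lies in `T₁`, so `W_{T₁} = V_{T₁}`.
-/

section Connectivity

variable {V : Type u} {G : SimpleGraph V}

theorem ConnIn.mono {S S' : Set V} {a b : V} (h : ConnIn G S a b) (hSS' : S ⊆ S') :
    ConnIn G S' a b :=
  let ⟨p, hp⟩ := h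
  ⟨p, fun v hv => hSS' (hp v hv)⟩

theorem ConnIn.symm {S : Set V} {a b : V} (h : ConnIn G S a b) : ConnIn G S b a :=
  let ⟨p, hp⟩ := h
  ⟨p.reverse, fun v hv => hp v (by simpa using hv)⟩

theorem ConnIn.trans {S : Set V} {a b c : V} (hab : ConnIn G S a b) (hbc : ConnIn G S b c) :
    ConnIn G S a c := by
  obtain ⟨p, hp⟩ := hab
  obtain ⟨q, hq⟩ := hbc
  refine ⟨p.append q, fun v hv => ?_⟩
  rcases (p.mem_support_append_iff q).1 hv with h | h
  exacts [hp v h, hq v h]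

theorem connIn_support_of_mem_support {x y a : V} (P : G.Walk x y) (ha : a ∈ P.support) :
    ConnIn G {v | v ∈ P.support} a x := by
  classical
  exact ⟨(P.takeUntil a ha).reverse, fun v hv =>
    P.support_takeUntil_subset_support ha (by simpa using hv)⟩

theorem IsConnSet.union_support {S : Set V} (hS : IsConnSet G S) {x y : V} (hx : x ∈ S)
    (P : G.Walk x y) : IsConnSet G (S ∪ {v | v ∈ P.support}) := by
  have hbase : ∀ a ∈ S ∪ {v | v ∈ P.support}, ConnIn G (S ∪ {v | v ∈ P.support}) a x := by
    rintro a (ha | ha)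
    · exact (hS.2 a ha x hx).mono Set.subset_union_left
    · exact (connIn_support_of_mem_support P ha).mono Set.subset_union_right
  exact ⟨⟨x, Or.inl hx⟩, fun a ha b hb => (hbase a ha).trans (hbase b hb).symm⟩

end Connectivity

section Tree

variable {ι : Type u} {T : SimpleGraph ι}

theorem SimpleGraph.Walk.IsPath.eq_of_mem_support_takeUntil_of_mem_support_dropUntil
    [DecidableEq ι] {a b u w : ι} {p : T.Walk a b} (hp : p.IsPath) (hu : u ∈ p.support)
    (hw₁ : w ∈ (p.takeUntil u hu).support) (hw₂ : w ∈ (p.dropUntil u hu).support) : w = u := by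
  have hnd := hp.support_nodup
  rw [← p.take_spec hu, Walk.support_append] at hnd
  by_contra hwu
  rw [← Walk.cons_tail_support, List.mem_cons] at hw₂
  exact (List.nodup_append.1 hnd).2.2 w hw₁ w (hw₂.resolve_left hwu) rfl

theorem desc_self (hT : T.Preconnected) (r t : ι) : Desc T r t t := by
  classical
  obtain ⟨w⟩ := hT r t
  exact ⟨w.bypass, w.bypass_isPath, Walk.end_mem_support _⟩

theorem right_notMem_side (t₁ t₂ : ι) : t₂ ∉ Side T t₁ t₂ :=
  fun ⟨q, _, hq⟩ => hq q.start_mem_support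

theorem right_mem_support_of_mem_side {t₁ t₂ w w' : ι} (hw : w ∈ Side T t₁ t₂)
    (hw' : w' ∉ Side T t₁ t₂) (π : T.Walk w' w) : t₂ ∈ π.support := by
  classical
  obtain ⟨q, -, hq⟩ := hw
  have hb : t₂ ∈ (π.append q).bypass.support := by
    by_contra hc
    exact hw' ⟨_, (π.append q).bypass_isPath, hc⟩
  exact ((π.mem_support_append_iff q).1 (Walk.support_bypass_subset_support _ hb)).resolve_right hq

/-- Otherwise the `r`–`s` path would cross the edge `t₁t₂` both before and after `u`. -/
theorem mem_side_of_desc (hT : T.IsAcyclic) {r t t₁ t₂ u s : ι} (ht : t ∉ Side T t₁ t₂)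
    (hu : u ∈ Side T t₁ t₂) (hdu : Desc T r t u) (hds : Desc T r u s) : s ∈ Side T t₁ t₂ := by
  classical
  by_contra hs
  obtain ⟨p₁, hp₁, htp₁⟩ := hdu
  obtain ⟨p, hp, hup⟩ := hds
  have hpre : p.takeUntil u hup = p₁ :=
    congrArg Subtype.val ((hT.subsingleton_path r u).elim ⟨_, hp.takeUntil hup⟩ ⟨p₁, hp₁⟩)
  have htpre : t ∈ (p.takeUntil u hup).support := hpre ▸ htp₁
  have hbefore : t₂ ∈ (p.takeUntil u hup).support :=
    Walk.support_dropUntil_subset_support _ htpre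
      (right_mem_support_of_mem_side hu ht ((p.takeUntil u hup).dropUntil t htpre))
  have hafter : t₂ ∈ (p.dropUntil u hup).support := by
    simpa using right_mem_support_of_mem_side hu hs (p.dropUntil u hup).reverse
  obtain rfl := hp.eq_of_mem_support_takeUntil_of_mem_support_dropUntil hup hbefore hafter
  exact right_notMem_side t₁ t₂ hu

end Tree

section UpdatedBags

variable {V ι : Type u} {G : SimpleGraph V} {T : SimpleGraph ι} {B : ι → Set V}

@[simp]
theorem mem_unionBags {A : Set ι} {v : V} : v ∈ unionBags B A ↔ ∃ u ∈ A, v ∈ B u := by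
  simp [unionBags]

theorem unionBags_updatedBag_of_mem (hT : T.Preconnected) {r t : ι} {x y : V} {P : G.Walk x y}
    (hP : ∀ v ∈ P.support, v ∈ unionBags B (descSet T r t)) {A : Set ι} (ht : t ∈ A) :
    unionBags (updatedBag T B r t P) A = unionBags B A ∪ {v | v ∈ P.support} := by
  ext v
  simp only [mem_unionBags, updatedBag, Set.mem_union, Set.mem_ofPred_eq]
  constructor
  · rintro ⟨u, hu, hv | ⟨-, hv, -⟩⟩
    exacts [Or.inl ⟨u, hu, hv⟩, Or.inr hv]
  · rintro (⟨u, hu, hv⟩ | hv)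
    · exact ⟨u, hu, Or.inl hv⟩
    · exact ⟨t, ht, Or.inr ⟨desc_self hT r t, hv, mem_unionBags.1 (hP v hv)⟩⟩

theorem unionBags_updatedBag_side_of_notMem (hT : T.IsAcyclic) {r t t₁ t₂ : ι} {x y : V}
    (P : G.Walk x y) (ht : t ∉ Side T t₁ t₂) :
    unionBags (updatedBag T B r t P) (Side T t₁ t₂) = unionBags B (Side T t₁ t₂) := by
  ext v
  simp only [mem_unionBags, updatedBag, Set.mem_union, Set.mem_ofPred_eq]
  constructor
  · rintro ⟨u, hu, hv | ⟨hdu, -, hvs⟩⟩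
    · exact ⟨u, hu, hv⟩
    · obtain ⟨s, hds, hvs⟩ := hvs
      exact ⟨s, mem_side_of_desc hT ht hu hdu hds, hvs⟩
  · rintro ⟨u, hu, hv⟩
    exact ⟨u, hu, Or.inl hv⟩

end UpdatedBags

/-- adding an admissible path as in `(*)` preserves stability. -/
theorem updated_stable {V ι : Type u} (G : SimpleGraph V) (T : SimpleGraph ι)
    (td : TreeDecomp G T) (hst : td.Stable) (r t : ι) {x y : V} (P : G.Walk x y)
    (hP : IsAdmissible G T td.bag r t P) :
    StableBags G T (updatedBag T td.bag r t P) := by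
  intro t₁ t₂ hadj
  by_cases ht : t ∈ Side T t₁ t₂
  · rw [unionBags_updatedBag_of_mem td.isTree.connected.preconnected hP.support_sub ht]
    exact (hst hadj).union_support (mem_unionBags.2 ⟨t, ht, hP.fst_mem⟩) P
  · rw [unionBags_updatedBag_side_of_notMem td.isTree.isAcyclic P ht]
    exact hst hadj
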